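/- arXiv:2604.03490 — 7 statements merged into one kernel-verified Lean document; each statement's English description precedes it below -/
import Mathlib

section
/- Let a0, a1, am1, a2, q0, q2, g0, g2 be real numbers with a1·am1 < 0 (the off-diagonal entries of A have opposite signs), a0·a2 > 0 (the diagonal entries of A have the same sign), q2 > 0, g2 > 0, and suppose q0·a1·a2 = −a0·am1·q2 and g0·am1²·q2 = g2·a1²·q0. Let A = !![a0, a1; am1, a2], Q = !![q0, 0; 0, q2], R = !![1/g0, 0; 0, 1/g2]. Then Q and R are positive definite and there exists a diagonal positive definite 2×2 real matrix P satisfying the algebraic Riccati equation AᵀP + PA − P·R⁻¹·P + Q = 0; consequently the LQR gain K = R⁻¹P is a diagonal matrix, i.e. the LQR is completely decentralized. -/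
open Matrix

set_option maxHeartbeats 1000000

lemma diag2_eq (a b : ℝ) : (!![a, 0; 0, b] : Matrix (Fin 2) (Fin 2) ℝ) = diagonal ![a, b] := by
  ext i j
  fin_cases i <;> fin_cases j <;> simp [diagonal]

/-- Conditions on a 2×2 state matrix `A = !![a0, a1; am1, a2]` with opposite-sign
off-diagonal entries and same-sign diagonal entries, together with the matching
decoupled cost weights `Q = diag(q0, q2)`, `R = diag(1/g0, 1/g2)`, guarantee that
`Q, R` are positive definite and the LQR (with `B = I`) is completely decentralized:
the ARE `AᵀP + PA − P R⁻¹ P + Q = 0` has a diagonal positive definite solution `P`,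
and the gain `K = R⁻¹ P` is diagonal. -/
theorem stmt_0 (a0 a1 am1 a2 q0 q2 g0 g2 : ℝ)
    (hoff : a1 * am1 < 0) (hdiag : a0 * a2 > 0)
    (hq2 : q2 > 0) (hg2 : g2 > 0)
    (hq : q0 * a1 * a2 = -(a0 * am1 * q2))
    (hg : g0 * am1 ^ 2 * q2 = g2 * a1 ^ 2 * q0) :
    (!![q0, 0; 0, q2] : Matrix (Fin 2) (Fin 2) ℝ).PosDef ∧
    (!![1/g0, 0; 0, 1/g2] : Matrix (Fin 2) (Fin 2) ℝ).PosDef ∧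
    ∃ P : Matrix (Fin 2) (Fin 2) ℝ, P.IsDiag ∧ P.PosDef ∧
      (!![a0, a1; am1, a2])ᵀ * P + P * !![a0, a1; am1, a2]
        - P * (!![1/g0, 0; 0, 1/g2] : Matrix (Fin 2) (Fin 2) ℝ)⁻¹ * P
        + !![q0, 0; 0, q2] = 0 ∧
      ((!![1/g0, 0; 0, 1/g2] : Matrix (Fin 2) (Fin 2) ℝ)⁻¹ * P).IsDiag := by
  have ha1 : a1 ≠ 0 := fun h => by simp [h] at hoff
  have ham1 : am1 ≠ 0 := fun h => by simp [h] at hoff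
  have ha0 : a0 ≠ 0 := fun h => by simp [h] at hdiag
  have ha2 : a2 ≠ 0 := fun h => by simp [h] at hdiag
  have hq0 : q0 > 0 := by
    have h1 : q0 * (a1 * a2) ^ 2 = ((a0 * a2) * (-(a1 * am1))) * q2 := by
      linear_combination (a1 * a2) * hq
    have h2 : 0 < ((a0 * a2) * (-(a1 * am1))) * q2 :=
      mul_pos (mul_pos hdiag (neg_pos.2 hoff)) hq2
    have h3 : 0 < (a1 * a2) ^ 2 := by positivity
    nlinarith
  have hg0 : g0 > 0 := by
    have h2 : (0:ℝ) < g2 * a1 ^ 2 * q0 := by positivity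
    have h3 : (0:ℝ) < am1 ^ 2 * q2 := by positivity
    nlinarith
  have hQ : (!![q0, 0; 0, q2] : Matrix (Fin 2) (Fin 2) ℝ).PosDef := by
    rw [diag2_eq]
    refine .diagonal ?_
    intro i; fin_cases i
    · simpa using hq0
    · simpa using hq2
  have hR : (!![1/g0, 0; 0, 1/g2] : Matrix (Fin 2) (Fin 2) ℝ).PosDef := by
    rw [diag2_eq]
    refine .diagonal ?_
    intro i; fin_cases i
    · simpa using by positivity
    · simpa using by positivity
  refine ⟨hQ, hR, ?_⟩
  have hRinv : (!![1/g0, 0; 0, 1/g2] : Matrix (Fin 2) (Fin 2) ℝ)⁻¹ = !![g0, 0; 0, g2] := by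
    apply inv_eq_right_inv
    ext i j
    fin_cases i <;> fin_cases j <;>
      simp [Matrix.mul_apply, Fin.sum_univ_two, one_div, inv_mul_cancel₀ hg0.ne',
        inv_mul_cancel₀ hg2.ne']
  set s := Real.sqrt (a2 ^ 2 + g2 * q2) with hs
  have hs2 : s ^ 2 = a2 ^ 2 + g2 * q2 := Real.sq_sqrt (by positivity)
  have hsa : |a2| < s := by
    have h1 : a2 ^ 2 < s ^ 2 := by nlinarith [mul_pos hg2 hq2]
    have hsnn : 0 ≤ s := hs ▸ Real.sqrt_nonneg _
    nlinarith [abs_nonneg a2, sq_abs a2]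
  set p2 := (a2 + s) / g2 with hp2
  have hp2pos : 0 < p2 := by
    apply div_pos _ hg2
    linarith [neg_abs_le a2, hsa]
  have heq2 : 2 * a2 * p2 - g2 * p2 ^ 2 + q2 = 0 := by
    rw [hp2]
    field_simp
    nlinarith [hs2]
  set p0 := -am1 * p2 / a1 with hp0
  have hp0a : a1 * p0 = -am1 * p2 := by
    rw [hp0]; field_simp
  have hp0pos : 0 < p0 := by
    rw [hp0, div_pos_iff]
    rcases lt_or_gt_of_ne ha1 with h | h
    · right; exact ⟨by nlinarith, h⟩
    · left; exact ⟨by nlinarith, h⟩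
  clear_value s p2 p0
  have hden : a1 ^ 2 * a2 * q2 ≠ 0 :=
    mul_ne_zero (mul_ne_zero (pow_ne_zero 2 ha1) ha2) hq2.ne'
  have hmul : (2 * a0 * p0 - g0 * p0 ^ 2 + q0) * (a1 ^ 2 * a2 * q2) = 0 := by
    linear_combination (q0 * a1 ^ 2 * a2) * heq2 + (-(2 * a1 * a2 * p2)) * hq
      + (-(a2 * p2 ^ 2)) * hg
      + (2 * a0 * a1 * a2 * q2 - g0 * a2 * q2 * (a1 * p0 - am1 * p2)) * hp0a
  have heq0 : 2 * a0 * p0 - g0 * p0 ^ 2 + q0 = 0 := by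
    rcases mul_eq_zero.mp hmul with h | h
    · exact h
    · exact absurd h hden
  refine ⟨!![p0, 0; 0, p2], ?_, ?_, ?_, ?_⟩
  · intro i j hij
    fin_cases i <;> fin_cases j <;> simp_all
  · rw [diag2_eq]
    refine .diagonal ?_
    intro i; fin_cases i
    · simpa using hp0pos
    · simpa using hp2pos
  · rw [hRinv]
    ext i j
    fin_cases i <;> fin_cases j <;>
      simp [Matrix.mul_apply, Fin.sum_univ_two, Matrix.transpose_apply, Matrix.vecHead, Matrix.vecTail]
    · linear_combination heq0
    · linear_combination hp0a
    · linear_combination hp0a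
    · linear_combination heq2
  · rw [hRinv]
    intro i j hij
    fin_cases i <;> fin_cases j <;> simp_all [Matrix.mul_apply, Fin.sum_univ_two]
end

section
/- Let a0, a1, am1, a2, q0, q2, g0, g2 be real numbers with a1·am1 < 0, a0·a2 > 0, q2 > 0, g2 > 0, q0·a1·a2 = −a0·am1·q2, and g0·am1²·q2 = g2·a1²·q0. Define p2 = a2/g2 + sqrt(a2²/g2² + q2/g2) and p0 = −(am1/a1)·p2. Then p2 > 0 and p0 > 0, and the diagonal matrix P = diag(p0, p2) satisfies the algebraic Riccati equation AᵀP + PA − P·diag(g0, g2)·P + diag(q0, q2) = 0, where A = !![a0, a1; am1, a2]. -/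
open Matrix

/-- Under the decentralization conditions on `A = !![a0, a1; am1, a2]` and the
decoupled weights, the explicit values `p2 = a2/g2 + √(a2²/g2² + q2/g2)` and
`p0 = −(am1/a1)·p2` are strictly positive and `P = diag(p0, p2)` solves the ARE
`AᵀP + PA − P·diag(g0,g2)·P + diag(q0,q2) = 0`. -/
theorem stmt_1 (a0 a1 am1 a2 q0 q2 g0 g2 p0 p2 : ℝ)
    (hoff : a1 * am1 < 0) (hdiag : a0 * a2 > 0)
    (hq2 : q2 > 0) (hg2 : g2 > 0)
    (hq : q0 * a1 * a2 = -(a0 * am1 * q2))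
    (hg : g0 * am1 ^ 2 * q2 = g2 * a1 ^ 2 * q0)
    (hp2 : p2 = a2 / g2 + Real.sqrt (a2 ^ 2 / g2 ^ 2 + q2 / g2))
    (hp0 : p0 = -(am1 / a1) * p2) :
    p2 > 0 ∧ p0 > 0 ∧
    (!![a0, a1; am1, a2])ᵀ * diagonal ![p0, p2]
      + diagonal ![p0, p2] * !![a0, a1; am1, a2]
      - diagonal ![p0, p2] * diagonal ![g0, g2] * diagonal ![p0, p2]
      + diagonal ![q0, q2] = 0 := by
  have ha1 : a1 ≠ 0 := by
    intro h; rw [h] at hoff; simp at hoff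
  have hS : (0:ℝ) ≤ a2 ^ 2 / g2 ^ 2 + q2 / g2 := by positivity
  have hsq : Real.sqrt (a2 ^ 2 / g2 ^ 2 + q2 / g2) ^ 2 = a2 ^ 2 / g2 ^ 2 + q2 / g2 :=
    Real.sq_sqrt hS
  -- key quadratic relation
  have hkey : g2 * p2 ^ 2 = 2 * a2 * p2 + q2 := by
    have h : (p2 - a2 / g2) ^ 2 = a2 ^ 2 / g2 ^ 2 + q2 / g2 := by
      rw [hp2, add_sub_cancel_left]; exact hsq
    have hg2' : g2 ≠ 0 := ne_of_gt hg2
    have h2 : (p2 * g2 - a2) ^ 2 = a2 ^ 2 + q2 * g2 := by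
      have := congrArg (· * g2 ^ 2) h
      field_simp at this
      have h3 : (p2 * g2 - a2) ^ 2 * (g2 ^ 2 * g2) = (a2 ^ 2 + q2 * g2) * (g2 ^ 2 * g2) := by
        linear_combination (g2 ^ 2 * g2) * this
      exact mul_right_cancel₀ (by positivity) h3
    nlinarith [h2]
  -- p2 > 0
  have hp2pos : p2 > 0 := by
    have h1 : Real.sqrt (a2 ^ 2 / g2 ^ 2) < Real.sqrt (a2 ^ 2 / g2 ^ 2 + q2 / g2) := by
      apply Real.sqrt_lt_sqrt (by positivity)
      have : q2 / g2 > 0 := by positivity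
      linarith
    have h2 : Real.sqrt (a2 ^ 2 / g2 ^ 2) = |a2 / g2| := by
      rw [show a2 ^ 2 / g2 ^ 2 = (a2 / g2) ^ 2 by ring, Real.sqrt_sq_eq_abs]
    have h3 : -(a2 / g2) ≤ |a2 / g2| := neg_le_abs _
    rw [hp2]; rw [h2] at h1; linarith
  -- p0 > 0
  have hrat : am1 / a1 < 0 := by
    have h1 : am1 / a1 = (a1 * am1) / a1 ^ 2 := by field_simp
    rw [h1]
    exact div_neg_of_neg_of_pos hoff (by positivity)
  have hp0pos : p0 > 0 := by
    rw [hp0]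
    have : -(am1 / a1) > 0 := by linarith
    positivity
  refine ⟨hp2pos, hp0pos, ?_⟩
  have hpa : a1 * p0 = -(am1 * p2) := by
    rw [hp0]; field_simp
  have h00' : a1 ^ 2 * q2 * (2 * a0 * p0 - g0 * p0 ^ 2 + q0) = 0 := by
    linear_combination (2*a0*a1*q2 - g0*q2*(a1*p0 - am1*p2)) * hpa + (-2*a1*p2) * hq
      + (-p2^2) * hg + (-a1^2*q0) * hkey
  have h00 : 2 * a0 * p0 - g0 * p0 ^ 2 + q0 = 0 := by
    have hne : a1 ^ 2 * q2 ≠ 0 := by positivity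
    exact (mul_eq_zero.mp h00').resolve_left hne
  have hT : (!![a0, a1; am1, a2])ᵀ = !![a0, am1; a1, a2] := by
    ext i j; fin_cases i <;> fin_cases j <;> rfl
  have hD : ∀ x y : ℝ, (diagonal ![x, y] : Matrix (Fin 2) (Fin 2) ℝ) = !![x, 0; 0, y] := by
    intro x y
    ext i j; fin_cases i <;> fin_cases j <;>
      simp [Matrix.diagonal_apply]
  rw [hT, hD, hD, hD]
  ext i j
  fin_cases i <;> fin_cases j <;>
    simp [Matrix.mul_apply, Fin.sum_univ_two]
  · linear_combination h00
  · linear_combination hpa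
  · linear_combination hpa
  · linear_combination -hkey
end

section
/- Let A, B, Q, R be n×n real symmetric circulant matrices (indexed by ZMod n) with B and R invertible, and let c ∈ ℝ. Define P = c·B⁻¹·R. Then P satisfies the algebraic Riccati equation AᵀP + PA − P B R⁻¹ Bᵀ P + Q = 0 if and only if c²·I − 2c·A·B⁻¹ − Q·R⁻¹ = 0; and in that case the LQR gain satisfies K = R⁻¹ Bᵀ P = c·I, so the LQR is completely decentralized. -/
open Matrix

private lemma comm_inv {m : Type*} [Fintype m] [DecidableEq m]
    (X Y : Matrix m m ℝ) (h : X * Y = Y * X) (hY : IsUnit Y.det) :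
    X * Y⁻¹ = Y⁻¹ * X := by
  calc X * Y⁻¹ = Y⁻¹ * Y * X * Y⁻¹ := by
        rw [Matrix.nonsing_inv_mul _ hY, Matrix.one_mul]
    _ = Y⁻¹ * (X * Y) * Y⁻¹ := by rw [h]; noncomm_ring
    _ = Y⁻¹ * X * (Y * Y⁻¹) := by noncomm_ring
    _ = Y⁻¹ * X := by rw [Matrix.mul_nonsing_inv _ hY, Matrix.mul_one]

/-- For symmetric circulant `A, B, Q, R` with `B, R` invertible, the candidate
`P = c • (B⁻¹ * R)` solves the ARE `AᵀP + PA − P B R⁻¹ Bᵀ P + Q = 0` iff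
`c²·I − 2c·A B⁻¹ − Q R⁻¹ = 0`; and in that case the LQR gain
`K = R⁻¹ Bᵀ P` equals `c·I`, hence is diagonal (complete decentralization). -/
theorem stmt_6 {n : ℕ} [NeZero n] (A B Q R : Matrix (ZMod n) (ZMod n) ℝ)
    (va vb vq vr : ZMod n → ℝ)
    (hA : A = circulant va) (hB : B = circulant vb)
    (hQ : Q = circulant vq) (hR : R = circulant vr)
    (hAs : A.IsSymm) (hBs : B.IsSymm) (hQs : Q.IsSymm) (hRs : R.IsSymm)
    (hBinv : IsUnit B.det) (hRinv : IsUnit R.det) (c : ℝ) :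
    ((Aᵀ * (c • (B⁻¹ * R)) + (c • (B⁻¹ * R)) * A
        - (c • (B⁻¹ * R)) * B * R⁻¹ * Bᵀ * (c • (B⁻¹ * R)) + Q = 0)
      ↔ ((c ^ 2) • (1 : Matrix (ZMod n) (ZMod n) ℝ)
          - (2 * c) • (A * B⁻¹) - Q * R⁻¹ = 0)) ∧
    (((c ^ 2) • (1 : Matrix (ZMod n) (ZMod n) ℝ)
        - (2 * c) • (A * B⁻¹) - Q * R⁻¹ = 0) →
      R⁻¹ * Bᵀ * (c • (B⁻¹ * R)) = c • (1 : Matrix (ZMod n) (ZMod n) ℝ) ∧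
      (R⁻¹ * Bᵀ * (c • (B⁻¹ * R))).IsDiag) := by
  have hAB : A * B = B * A := by rw [hA, hB]; exact circulant_mul_comm va vb
  have hRA : R * A = A * R := by rw [hA, hR]; exact circulant_mul_comm vr va
  have hRB : R * B = B * R := by rw [hB, hR]; exact circulant_mul_comm vr vb
  have hABi : A * B⁻¹ = B⁻¹ * A := comm_inv A B hAB hBinv
  have hRBi : R * B⁻¹ = B⁻¹ * R := comm_inv R B hRB hBinv
  have hBt : Bᵀ = B := hBs
  have hAt : Aᵀ = A := hAs
  -- the gain
  have hK : R⁻¹ * Bᵀ * (c • (B⁻¹ * R)) = c • (1 : Matrix (ZMod n) (ZMod n) ℝ) := by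
    rw [hBt, Matrix.mul_smul]
    congr 1
    calc R⁻¹ * B * (B⁻¹ * R) = R⁻¹ * (B * B⁻¹) * R := by noncomm_ring
      _ = R⁻¹ * R := by rw [Matrix.mul_nonsing_inv _ hBinv, Matrix.mul_one]
      _ = 1 := Matrix.nonsing_inv_mul _ hRinv
  -- key identity
  have h1 : A * (B⁻¹ * R) = A * B⁻¹ * R := by noncomm_ring
  have h2 : B⁻¹ * R * A = A * B⁻¹ * R := by
    rw [Matrix.mul_assoc, hRA, ← Matrix.mul_assoc, ← hABi]
  have h3 : B⁻¹ * R * B * R⁻¹ * B * (B⁻¹ * R) = R := by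
    calc B⁻¹ * R * B * R⁻¹ * B * (B⁻¹ * R)
        = B⁻¹ * (R * B) * R⁻¹ * (B * B⁻¹) * R := by noncomm_ring
      _ = B⁻¹ * (B * R) * R⁻¹ * R := by
          rw [hRB, Matrix.mul_nonsing_inv _ hBinv, Matrix.mul_one]
      _ = (B⁻¹ * B) * (R * R⁻¹) * R := by noncomm_ring
      _ = R := by
          rw [Matrix.nonsing_inv_mul _ hBinv, Matrix.mul_nonsing_inv _ hRinv,
            Matrix.mul_one, Matrix.one_mul]
  have hQR : Q * R⁻¹ * R = Q := by
    rw [Matrix.mul_assoc, Matrix.nonsing_inv_mul _ hRinv, Matrix.mul_one]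
  have key : Aᵀ * (c • (B⁻¹ * R)) + (c • (B⁻¹ * R)) * A
      - (c • (B⁻¹ * R)) * B * R⁻¹ * Bᵀ * (c • (B⁻¹ * R)) + Q
      = (-((c ^ 2) • (1 : Matrix (ZMod n) (ZMod n) ℝ)
          - (2 * c) • (A * B⁻¹) - Q * R⁻¹)) * R := by
    rw [hAt, hBt]
    have e1 : A * (c • (B⁻¹ * R)) = c • (A * B⁻¹ * R) := by rw [Matrix.mul_smul, h1]
    have e2 : (c • (B⁻¹ * R)) * A = c • (A * B⁻¹ * R) := by rw [Matrix.smul_mul, h2]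
    have e3 : (c • (B⁻¹ * R)) * B * R⁻¹ * B * (c • (B⁻¹ * R))
        = (c ^ 2) • R := by
      simp only [Matrix.smul_mul, Matrix.mul_smul, smul_smul]
      rw [h3, sq]
    rw [e1, e2, e3, neg_sub, Matrix.sub_mul, Matrix.sub_mul, Matrix.smul_mul,
      Matrix.smul_mul, Matrix.one_mul, hQR]
    module
  have hmulR : ∀ X : Matrix (ZMod n) (ZMod n) ℝ, X * R = 0 ↔ X = 0 := by
    intro X
    constructor
    · intro h
      have := congrArg (· * R⁻¹) h
      simpa [Matrix.mul_assoc, Matrix.mul_nonsing_inv _ hRinv] using this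
    · intro h; rw [h, Matrix.zero_mul]
  constructor
  · rw [key, hmulR, neg_eq_zero]
  · intro _
    exact ⟨hK, hK ▸ (isDiag_one.smul c : ((c • (1 : Matrix (ZMod n) (ZMod n) ℝ)).IsDiag))⟩
end

section
/- Let a0, a1, b0, b1, q0, q1, r0, r1 be real numbers such that the 2×2 symmetric circulant matrices A = !![a0, a1; a1, a0], B = !![b0, b1; b1, b0], Q = !![q0, q1; q1, q0], R = !![r0, r1; r1, r0] satisfy: B, Q, R are positive definite, (a0 − a1)·(b0 + b1) = (a0 + a1)·(b0 − b1), and (q0 − q1)·(r0 + r1) = (q0 + q1)·(r0 − r1). Then there exist c > 0 and a positive definite 2×2 real matrix P satisfying the algebraic Riccati equation AᵀP + PA − P B R⁻¹ Bᵀ P + Q = 0 with LQR gain R⁻¹ Bᵀ P = c·I, i.e. the LQR is completely decentralized. -/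
open Matrix

set_option maxHeartbeats 2000000 in
/-- For 2×2 symmetric circulant data with `B, Q, R` positive definite, the
balance conditions `(a0−a1)(b0+b1) = (a0+a1)(b0−b1)` and
`(q0−q1)(r0+r1) = (q0+q1)(r0−r1)` suffice for complete decentralization: there
exist `c > 0` and a positive definite `P` solving the ARE with gain
`R⁻¹ Bᵀ P = c·I`. -/
theorem stmt_8 (a0 a1 b0 b1 q0 q1 r0 r1 : ℝ)
    (hB : (!![b0, b1; b1, b0] : Matrix (Fin 2) (Fin 2) ℝ).PosDef)
    (hQ : (!![q0, q1; q1, q0] : Matrix (Fin 2) (Fin 2) ℝ).PosDef)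
    (hR : (!![r0, r1; r1, r0] : Matrix (Fin 2) (Fin 2) ℝ).PosDef)
    (hab : (a0 - a1) * (b0 + b1) = (a0 + a1) * (b0 - b1))
    (hqr : (q0 - q1) * (r0 + r1) = (q0 + q1) * (r0 - r1)) :
    ∃ c : ℝ, 0 < c ∧ ∃ P : Matrix (Fin 2) (Fin 2) ℝ, P.PosDef ∧
      (!![a0, a1; a1, a0])ᵀ * P + P * !![a0, a1; a1, a0]
        - P * !![b0, b1; b1, b0] * (!![r0, r1; r1, r0] : Matrix (Fin 2) (Fin 2) ℝ)⁻¹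
          * (!![b0, b1; b1, b0])ᵀ * P
        + !![q0, q1; q1, q0] = 0 ∧
      (!![r0, r1; r1, r0] : Matrix (Fin 2) (Fin 2) ℝ)⁻¹ * (!![b0, b1; b1, b0])ᵀ * P
        = c • (1 : Matrix (Fin 2) (Fin 2) ℝ) := by
  have e1 : (![1, 1] : Fin 2 → ℝ) ≠ 0 := by
    intro h; have := congrFun h 0; simp at this
  have e2 : (![1, -1] : Fin 2 → ℝ) ≠ 0 := by
    intro h; have := congrFun h 0; simp at this
  have keyB1 := hB.dotProduct_mulVec_pos (x := ![1,1]) e1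
  have keyB2 := hB.dotProduct_mulVec_pos (x := ![1,-1]) e2
  have keyQ1 := hQ.dotProduct_mulVec_pos (x := ![1,1]) e1
  have keyQ2 := hQ.dotProduct_mulVec_pos (x := ![1,-1]) e2
  have keyR1 := hR.dotProduct_mulVec_pos (x := ![1,1]) e1
  have keyR2 := hR.dotProduct_mulVec_pos (x := ![1,-1]) e2
  simp [dotProduct, mulVec, Fin.sum_univ_two] at keyB1 keyB2 keyQ1 keyQ2 keyR1 keyR2
  have hbp : 0 < b0 + b1 := by nlinarith
  have hbm : 0 < b0 - b1 := by nlinarith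
  have hqp : 0 < q0 + q1 := by nlinarith
  have hrp : 0 < r0 + r1 := by nlinarith
  have hrm : 0 < r0 - r1 := by nlinarith
  set t := (a0 + a1) / (b0 + b1) with ht
  set s := (q0 + q1) / (r0 + r1) with hs'
  have hta : a0 + a1 = t * (b0 + b1) := by rw [ht]; field_simp
  have htb : a0 - a1 = t * (b0 - b1) := by
    rw [ht]; field_simp; linear_combination hab
  have hsa : q0 + q1 = s * (r0 + r1) := by rw [hs']; field_simp
  have hsb : q0 - q1 = s * (r0 - r1) := by
    rw [hs']; field_simp; linear_combination hqr
  have hs : 0 < s := div_pos hqp hrp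
  clear_value t s
  obtain ⟨c, hc, hc2⟩ : ∃ c : ℝ, 0 < c ∧ c^2 = 2*t*c + s := by
    refine ⟨t + Real.sqrt (t^2 + s), ?_, ?_⟩
    · have h1 : (0:ℝ) ≤ t^2 + s := by positivity
      have h2 := Real.sq_sqrt h1
      have h3 := Real.sqrt_nonneg (t^2+s)
      nlinarith
    · have h2 := Real.sq_sqrt (show (0:ℝ) ≤ t^2+s by positivity)
      linear_combination h2
  set u := c*(r0+r1)/(b0+b1) with huu
  set v := c*(r0-r1)/(b0-b1) with hvv
  have hu : u*(b0+b1) = c*(r0+r1) := by rw [huu]; field_simp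
  have hv : v*(b0-b1) = c*(r0-r1) := by rw [hvv]; field_simp
  have hu0 : 0 < u := div_pos (mul_pos hc hrp) hbp
  have hv0 : 0 < v := div_pos (mul_pos hc hrm) hbm
  clear_value u v
  have hBT : (!![b0,b1;b1,b0] : Matrix (Fin 2) (Fin 2) ℝ)ᵀ = !![b0,b1;b1,b0] := by
    ext i j; fin_cases i <;> fin_cases j <;> simp
  have hg0 : b0*((u+v)/2) + b1*((u-v)/2) = c*r0 := by linear_combination hu/2 + hv/2
  have hg1 : b0*((u-v)/2) + b1*((u+v)/2) = c*r1 := by linear_combination hu/2 - hv/2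
  have hp : 2*(a0+a1)*u - c*(b0+b1)*u + (q0+q1) = 0 := by
    linear_combination 2*u*hta + (2*t - c)*hu + hsa - (r0+r1)*hc2
  have hm : 2*(a0-a1)*v - c*(b0-b1)*v + (q0-q1) = 0 := by
    linear_combination 2*v*htb + (2*t - c)*hv + hsb - (r0-r1)*hc2
  have hA0 : 2*(a0*((u+v)/2) + a1*((u-v)/2)) - c*(((u+v)/2)*b0 + ((u-v)/2)*b1) + q0 = 0 := by
    linear_combination hp/2 + hm/2
  have hA1 : 2*(a0*((u-v)/2) + a1*((u+v)/2)) - c*(((u-v)/2)*b0 + ((u+v)/2)*b1) + q1 = 0 := by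
    linear_combination hp/2 - hm/2
  set P : Matrix (Fin 2) (Fin 2) ℝ := !![(u+v)/2, (u-v)/2; (u-v)/2, (u+v)/2] with hP
  clear_value P
  have hdet : IsUnit (!![r0, r1; r1, r0] : Matrix (Fin 2) (Fin 2) ℝ).det :=
    isUnit_iff_ne_zero.mpr hR.det_pos.ne'
  have hG : (!![b0,b1;b1,b0] : Matrix (Fin 2) (Fin 2) ℝ)ᵀ * P
      = !![r0,r1;r1,r0] * (c • (1 : Matrix (Fin 2) (Fin 2) ℝ)) := by
    rw [hBT, hP]; ext i j
    fin_cases i <;> fin_cases j <;>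
      simp [Matrix.mul_apply, Fin.sum_univ_two, Matrix.one_apply] <;>
      [linear_combination hg0; linear_combination hg1; linear_combination hg1;
       linear_combination hg0]
  have hgain : (!![r0, r1; r1, r0] : Matrix (Fin 2) (Fin 2) ℝ)⁻¹ * (!![b0, b1; b1, b0])ᵀ * P
      = c • (1 : Matrix (Fin 2) (Fin 2) ℝ) := by
    rw [Matrix.mul_assoc, hG, ← Matrix.mul_assoc, Matrix.nonsing_inv_mul _ hdet,
      Matrix.one_mul]
  refine ⟨c, hc, P, Matrix.PosDef.of_dotProduct_mulVec_pos ?_ ?_, ?_, hgain⟩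
  · show Pᴴ = P
    rw [hP]; ext i j; fin_cases i <;> fin_cases j <;> simp
  · intro x hx
    have hx' : x 0 ≠ 0 ∨ x 1 ≠ 0 := by
      by_contra h; push_neg at h; apply hx; funext i; fin_cases i <;> simp [h.1, h.2]
    have hne : x 0 + x 1 ≠ 0 ∨ x 0 - x 1 ≠ 0 := by
      rcases hx' with h | h <;>
        (by_contra hh; push_neg at hh; exact h (by linarith [hh.1, hh.2]))
    have hform : dotProduct (star x) (P *ᵥ x)
        = (u*(x 0 + x 1)^2 + v*(x 0 - x 1)^2)/2 := by
      rw [hP]; simp [dotProduct, mulVec, Fin.sum_univ_two]; ring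
    rw [hform]
    clear hform hx hB hQ hR keyB1 keyB2 keyQ1 keyQ2 keyR1 keyR2 hG hgain hdet
    rcases hne with h | h
    · have h2 : 0 < (x 0 + x 1)^2 :=
        lt_of_le_of_ne (sq_nonneg _) (Ne.symm (pow_ne_zero 2 h))
      nlinarith [mul_pos hu0 h2, mul_nonneg hv0.le (sq_nonneg (x 0 - x 1))]
    · have h2 : 0 < (x 0 - x 1)^2 :=
        lt_of_le_of_ne (sq_nonneg _) (Ne.symm (pow_ne_zero 2 h))
      nlinarith [mul_pos hv0 h2, mul_nonneg hu0.le (sq_nonneg (x 0 + x 1))]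
  · have hmid : P * !![b0, b1; b1, b0] * (!![r0, r1; r1, r0] : Matrix (Fin 2) (Fin 2) ℝ)⁻¹
        * (!![b0, b1; b1, b0])ᵀ * P = c • (P * !![b0, b1; b1, b0]) := by
      calc P * !![b0, b1; b1, b0] * (!![r0, r1; r1, r0] : Matrix (Fin 2) (Fin 2) ℝ)⁻¹
            * (!![b0, b1; b1, b0])ᵀ * P
          = P * !![b0, b1; b1, b0] * ((!![r0, r1; r1, r0] : Matrix (Fin 2) (Fin 2) ℝ)⁻¹
            * (!![b0, b1; b1, b0])ᵀ * P) := by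
            simp only [Matrix.mul_assoc]
        _ = P * !![b0, b1; b1, b0] * (c • (1 : Matrix (Fin 2) (Fin 2) ℝ)) := by rw [hgain]
        _ = c • (P * !![b0, b1; b1, b0]) := by
            rw [Matrix.mul_smul, Matrix.mul_one]
    rw [hmid]
    have hAT : (!![a0,a1;a1,a0] : Matrix (Fin 2) (Fin 2) ℝ)ᵀ = !![a0,a1;a1,a0] := by
      ext i j; fin_cases i <;> fin_cases j <;> simp
    rw [hAT, hP]
    ext i j
    fin_cases i <;> fin_cases j <;>
      simp [Matrix.mul_apply, Fin.sum_univ_two] <;>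
      [linear_combination hA0; linear_combination hA1; linear_combination hA1;
       linear_combination hA0]
end

section
/- Fix n ≥ 2 and Δ > 0, and let D₂ = (S + Sᵀ − 2·I)/Δ² be the n×n circulant discrete Laplacian, where S is the cyclic shift matrix. Then there do not exist c ∈ ℝ and q, r > 0 such that c²·I − 2c·D₂ − (q/r)·I = 0. Equivalently: no decoupled (scalar) cost Q = q·I, R = r·I yields a completely decentralized LQR for the discrete diffusion dynamics ẋ = D₂ x + u. -/
open Matrix

/-- For the discrete Laplacian `D₂ = (S + Sᵀ − 2I)/Δ²` on `n ≥ 2` sites, no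
decoupled (scalar) cost `Q = q·I`, `R = r·I` (with `q, r > 0`) decentralizes
the LQR for `ẋ = D₂ x + u`: there is no `c ∈ ℝ` with
`c²·I − 2c·D₂ − (q/r)·I = 0`. -/
theorem stmt_12 (n : ℕ) [NeZero n] (hn : 2 ≤ n) (Δ : ℝ) (hΔ : 0 < Δ) :
    let S : Matrix (ZMod n) (ZMod n) ℝ := Matrix.of fun i j => if j = i + 1 then 1 else 0
    let D₂ : Matrix (ZMod n) (ZMod n) ℝ := (Δ ^ 2)⁻¹ • (S + Sᵀ - 2 • (1 : Matrix (ZMod n) (ZMod n) ℝ))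
    ¬ ∃ (c q r : ℝ), 0 < q ∧ 0 < r ∧
        (c ^ 2) • (1 : Matrix (ZMod n) (ZMod n) ℝ) - (2 * c) • D₂
          - (q / r) • (1 : Matrix (ZMod n) (ZMod n) ℝ) = 0 := by
  intro S D₂
  rintro ⟨c, q, r, hq, hr, heq⟩
  haveI : Fact (1 < n) := ⟨hn⟩
  have h01 : (0 : ZMod n) ≠ 1 := zero_ne_one
  have hΔ2 : (Δ ^ 2)⁻¹ > 0 := by positivity
  have e01 := congrFun (congrFun heq 0) 1
  have e00 := congrFun (congrFun heq 0) 0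
  have hqr : q / r > 0 := by positivity
  have hc : c = 0 := by
    by_cases h2 : ((0 : ZMod n) = 1 + 1) <;>
    [ (simp only [D₂, S, Matrix.sub_apply, Matrix.add_apply, Matrix.smul_apply, Matrix.one_apply,
        Matrix.transpose_apply, Matrix.of_apply, Matrix.zero_apply, smul_eq_mul, zero_add,
        if_neg h01, reduceIte, if_pos h2] at e01; norm_num at e01);
      (simp only [D₂, S, Matrix.sub_apply, Matrix.add_apply, Matrix.smul_apply, Matrix.one_apply,
        Matrix.transpose_apply, Matrix.of_apply, Matrix.zero_apply, smul_eq_mul, zero_add,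
        if_neg h01, reduceIte, if_neg h2] at e01; norm_num at e01)] <;>
    · rcases e01 with h | h
      · exact h
      · exact absurd h hΔ.ne'
  subst hc
  simp only [D₂, S, Matrix.sub_apply, Matrix.add_apply, Matrix.smul_apply, Matrix.one_apply,
    Matrix.transpose_apply, Matrix.of_apply, Matrix.zero_apply, smul_eq_mul, zero_add,
    if_neg h01, reduceIte] at e00
  norm_num at e00
  rcases e00 with h | h <;> linarith
end

section
/- Let A1, A2, B0, Q0, Q2, R0, P0, P1, P2 be n×n real matrices with R0 invertible. Define A = fromBlocks 0 I A1 A2, B = [[0], [B0]], Q = fromBlocks Q0 0 0 Q2, and P = fromBlocks P0 P1 P1ᵀ P2. If P satisfies the algebraic Riccati equation AᵀP + PA − P B R0⁻¹ Bᵀ P + Q = 0, then P2 satisfies the smaller algebraic Riccati equation A2ᵀ·P2 + P2·A2 − P2·B0·R0⁻¹·B0ᵀ·P2 + Q̄ = 0, where Q̄ = Q2 + P1 + P1ᵀ. -/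
open Matrix

/-- Second-order dynamics: if `P = [[P0, P1], [P1ᵀ, P2]]` solves the ARE for
`A = [[0, I], [A1, A2]]`, `B = [[0], [B0]]`, `Q = blockdiag(Q0, Q2)`, `R = R0`,
then the block `P2` solves the smaller ARE
`A2ᵀ P2 + P2 A2 − P2 B0 R0⁻¹ B0ᵀ P2 + Q̄ = 0` with `Q̄ = Q2 + P1 + P1ᵀ`. -/
theorem stmt_14 {n : ℕ} (A1 A2 B0 Q0 Q2 R0 P0 P1 P2 : Matrix (Fin n) (Fin n) ℝ)
    (hR0 : IsUnit R0.det)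
    (hARE : (fromBlocks 0 1 A1 A2)ᵀ * fromBlocks P0 P1 P1ᵀ P2
        + fromBlocks P0 P1 P1ᵀ P2 * fromBlocks 0 1 A1 A2
        - fromBlocks P0 P1 P1ᵀ P2 * fromRows (0 : Matrix (Fin n) (Fin n) ℝ) B0
          * R0⁻¹ * (fromRows (0 : Matrix (Fin n) (Fin n) ℝ) B0)ᵀ
          * fromBlocks P0 P1 P1ᵀ P2
        + fromBlocks Q0 0 0 Q2 = 0) :
    A2ᵀ * P2 + P2 * A2 - P2 * B0 * R0⁻¹ * B0ᵀ * P2 + (Q2 + P1 + P1ᵀ) = 0 := by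

  have hB : fromRows (0 : Matrix (Fin n) (Fin n) ℝ) B0 * R0⁻¹
      * (fromRows (0 : Matrix (Fin n) (Fin n) ℝ) B0)ᵀ
      = fromBlocks 0 0 0 (B0 * R0⁻¹ * B0ᵀ) := by
    rw [transpose_fromRows, fromRows_mul, fromRows_mul_fromCols]
    simp
  rw [show fromBlocks P0 P1 P1ᵀ P2 * fromRows (0 : Matrix (Fin n) (Fin n) ℝ) B0
      * R0⁻¹ * (fromRows (0 : Matrix (Fin n) (Fin n) ℝ) B0)ᵀ * fromBlocks P0 P1 P1ᵀ P2
      = fromBlocks P0 P1 P1ᵀ P2 * (fromRows (0 : Matrix (Fin n) (Fin n) ℝ) B0 * R0⁻¹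
        * (fromRows (0 : Matrix (Fin n) (Fin n) ℝ) B0)ᵀ) * fromBlocks P0 P1 P1ᵀ P2 by
      simp only [Matrix.mul_assoc], hB] at hARE
  have h := congrArg Matrix.toBlocks₂₂ hARE
  simp only [sub_eq_add_neg, fromBlocks_neg, fromBlocks_transpose, fromBlocks_multiply, fromBlocks_add, toBlocks_fromBlocks₂₂,
    Matrix.mul_zero, Matrix.zero_mul, zero_add, add_zero, Matrix.one_mul, Matrix.mul_one,
    transpose_zero, transpose_one] at h
  have h0 : toBlocks₂₂ (0 : Matrix (Fin n ⊕ Fin n) (Fin n ⊕ Fin n) ℝ) = 0 := rfl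
  rw [h0] at h
  rw [← h]
  noncomm_ring
end

section
/- Let r1, r2, k1, k2, b, e be positive real numbers with r1 > b·k2, let σ = e·k1·k2·b² + r1·r2, and define the linearized predator–prey Jacobian J* = !![−r1·r2·(r1 − b·k2)/σ, −b·k1·r2·(r1 − b·k2)/σ; b·e·k2·r1·(r2 + b·e·k1)/σ, −r1·r2·(r2 + b·e·k1)/σ]. Then: (i) the off-diagonal entries J*₁₂ and J*₂₁ have opposite signs (J*₁₂·J*₂₁ < 0); (ii) the diagonal entries J*₁₁ and J*₂₂ have the same sign (J*₁₁·J*₂₂ > 0); and (iii) the decentralizing state-weight ratio equals −(J*₁₁·J*₂₁)/(J*₁₂·J*₂₂) = e·k2·r1/(k1·r2). -/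
open Matrix

/-- The linearized predator–prey Jacobian `J*` at the coexistence equilibrium
(with `r1 > b k2`) has opposite-sign off-diagonal entries, same-sign diagonal
entries, and decentralizing weight ratio
`−(J*₁₁ J*₂₁)/(J*₁₂ J*₂₂) = e k2 r1/(k1 r2)`. -/
theorem stmt_16 (r1 r2 k1 k2 b e : ℝ)
    (hr1 : 0 < r1) (hr2 : 0 < r2) (hk1 : 0 < k1) (hk2 : 0 < k2)
    (hb : 0 < b) (he : 0 < e) (hdom : r1 > b * k2) :
    let σ : ℝ := e * k1 * k2 * b ^ 2 + r1 * r2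
    let J : Matrix (Fin 2) (Fin 2) ℝ :=
      !![-(r1 * r2 * (r1 - b * k2)) / σ, -(b * k1 * r2 * (r1 - b * k2)) / σ;
         b * e * k2 * r1 * (r2 + b * e * k1) / σ, -(r1 * r2 * (r2 + b * e * k1)) / σ]
    J 0 1 * J 1 0 < 0 ∧
    J 0 0 * J 1 1 > 0 ∧
    -(J 0 0 * J 1 0) / (J 0 1 * J 1 1) = e * k2 * r1 / (k1 * r2) := by
  intro σ J
  have hσ : 0 < σ := by positivity
  have hd : 0 < r1 - b * k2 := by linarith
  have hs : 0 < r2 + b * e * k1 := by positivity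
  have e01 : J 0 1 = -(b * k1 * r2 * (r1 - b * k2)) / σ := rfl
  have e10 : J 1 0 = b * e * k2 * r1 * (r2 + b * e * k1) / σ := rfl
  have e00 : J 0 0 = -(r1 * r2 * (r1 - b * k2)) / σ := rfl
  have e11 : J 1 1 = -(r1 * r2 * (r2 + b * e * k1)) / σ := rfl
  rw [e01, e10, e00, e11]
  refine ⟨?_, ?_, ?_⟩
  · have h1 : 0 < b * k1 * r2 * (r1 - b * k2) / σ := by positivity
    have h2 : 0 < b * e * k2 * r1 * (r2 + b * e * k1) / σ := by positivity
    rw [neg_div]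
    nlinarith
  · have h1 : 0 < r1 * r2 * (r1 - b * k2) / σ := by positivity
    have h2 : 0 < r1 * r2 * (r2 + b * e * k1) / σ := by positivity
    rw [neg_div, neg_div]
    nlinarith
  · field_simp
end
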